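/- (Lemma 2.1) Let G = G₁ ∪ G₂ ∪ G₃ be a connected graph, where G₁, G₂, G₃ are connected subgraphs, each with at least 2 vertices, such that V(Gᵢ) ∩ V(Gⱼ) = {v₀} for all 1 ≤ i ≠ j ≤ 3 and every edge of G lies in some Gᵢ. Let u ∈ V(G₂)\{v₀}, and let G̃ be the graph obtained from G by moving G₃ from v₀ to u. Let x be a unit eigenvector of L_D(G) corresponding to ρ_L(G), writing x_v = x(v). Then: (i) if Σ_{v_i ∈ V(G₃)\{v₀}} Σ_{v_j ∈ V(G₁)} (x_{v_i} − x_{v_j})² ≥ Σ_{v_i ∈ V(G₃)\{v₀}} Σ_{v_j ∈ V(G₂)} (x_{v_i} − x_{v_j})², then ρ_L(G̃) ≥ ρ_L(G); (ii) if the same inequality holds strictly, then ρ_L(G̃) > ρ_L(G). -/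

import Mathlib

/-!
The quadratic form of the distance Laplacian is `xᵀ L_D x = ½ ∑_{a,b} d(a,b) (x_a - x_b)²`. For the
unit eigenvector `x` of `ρ_L(G)` this is `ρ_L(G)`, while for `G̃` it is at most `ρ_L(G̃)`, so
`2 (ρ_L(G̃) - ρ_L(G)) ≥ ∑_{a,b} (d_G̃(a,b) - d_G(a,b)) (x_a - x_b)²`. Moving the branch
`A = V(G₃) \ {v₀}` from `v₀` to `u` changes no distance inside `A` or inside its complement, and for
`i ∈ A`, `j ∉ A` it turns `d(i,v₀) + d(v₀,j)` into `d(i,v₀) + d(u,j)`. The increment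
`d(u,j) - d(v₀,j)` equals `d(u,v₀)` on `V(G₁)` and is at least `-d(u,v₀)` everywhere, hence
`ρ_L(G̃) - ρ_L(G) ≥ d(u,v₀) (∑_{i ∈ A, j ∈ V(G₁)} (x_i - x_j)² - ∑_{i ∈ A, j ∈ V(G₂)} (x_i - x_j)²)`.
-/

open Matrix Finset

/-- The transmission of a vertex: sum of distances to all vertices. -/
noncomputable def transmission {V : Type*} [Fintype V] (G : SimpleGraph V) (u : V) : ℝ :=
  ∑ w : V, (G.dist u w : ℝ)

/-- The distance Laplacian matrix `L_D(G) = Tr(G) - D(G)`. -/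
noncomputable def distLaplacian {V : Type*} [Fintype V] (G : SimpleGraph V) :
    Matrix V V ℝ := fun u v =>
  letI := Classical.decEq V
  (if u = v then transmission G u else 0) - (G.dist u v : ℝ)

/-- The largest eigenvalue of the distance Laplacian (distance Laplacian spectral radius). -/
noncomputable def rhoL {V : Type*} [Fintype V] (G : SimpleGraph V) : ℝ :=
  sSup {μ : ℝ | ∃ x : V → ℝ, x ≠ 0 ∧ (distLaplacian G).mulVec x = μ • x}

theorem Finset.sum_sum_eq_two_nsmul_sum_sum_compl {ι M : Type*} [Fintype ι] [DecidableEq ι]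
    [AddCommMonoid M] (A : Finset ι) {F : ι → ι → M} (hF : ∀ a b, F a b = F b a)
    (hF₀ : ∀ a b, (a ∈ A ↔ b ∈ A) → F a b = 0) :
    ∑ a, ∑ b, F a b = 2 • ∑ a ∈ A, ∑ b ∈ Aᶜ, F a b := by
  have hA : ∀ a ∈ A, ∑ b ∈ A, F a b = 0 := fun a ha =>
    sum_eq_zero fun b hb => hF₀ a b (iff_of_true ha hb)
  have hAc : ∀ a ∈ Aᶜ, ∑ b ∈ Aᶜ, F a b = 0 := fun a ha =>
    sum_eq_zero fun b hb => hF₀ a b (iff_of_false (mem_compl.1 ha) (mem_compl.1 hb))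
  simp_rw [← sum_add_sum_compl A (fun a => ∑ b, F a b), ← sum_add_sum_compl A (F _),
    sum_add_distrib, sum_eq_zero hA, sum_eq_zero hAc, zero_add, add_zero, two_nsmul]
  rw [sum_comm]
  simp_rw [hF]

theorem Finset.mul_sum_sub_sum_le_sum_mul {ι : Type*} [DecidableEq ι] {s t U : Finset ι}
    {c w : ι → ℝ} {δ : ℝ} (hsU : s ⊆ U) (hUt : U \ s ⊆ t) (hδ : 0 ≤ δ) (hw : ∀ j, 0 ≤ w j)
    (hcs : ∀ j ∈ s, c j = δ) (hcU : ∀ j ∈ U, -δ ≤ c j) :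
    δ * (∑ j ∈ s, w j - ∑ j ∈ t, w j) ≤ ∑ j ∈ U, c j * w j := by
  have hs : ∑ j ∈ s, c j * w j = δ * ∑ j ∈ s, w j := by
    rw [mul_sum]
    exact sum_congr rfl fun j hj => by rw [hcs j hj]
  rw [← sum_sdiff hsU, hs]
  have : -δ * ∑ j ∈ t, w j ≤ ∑ j ∈ U \ s, c j * w j :=
    calc -δ * ∑ j ∈ t, w j ≤ -δ * ∑ j ∈ U \ s, w j :=
          mul_le_mul_of_nonpos_left (sum_le_sum_of_subset_of_nonneg hUt fun j _ _ => hw j)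
            (neg_nonpos.2 hδ)
      _ ≤ ∑ j ∈ U \ s, c j * w j := by
          rw [mul_sum]
          exact sum_le_sum fun j hj => mul_le_mul_of_nonneg_right (hcU j (sdiff_subset hj)) (hw j)
  linarith

theorem Finset.notMem_erase_of_inter_eq_singleton {α : Type*} [DecidableEq α] {s t : Finset α}
    {a x : α} (h : s ∩ t = {a}) (hx : x ∈ s) : x ∉ t.erase a := fun hx' =>
  (mem_erase.1 hx').1 (by simpa [h] using mem_inter.2 ⟨hx, (mem_erase.1 hx').2⟩)

open Module.End in
theorem LinearMap.IsSymmetric.re_inner_le_sSup_mul_norm_sq {𝕜 E : Type*} [RCLike 𝕜]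
    [NormedAddCommGroup E] [InnerProductSpace 𝕜 E] [FiniteDimensional 𝕜 E] {T : E →ₗ[𝕜] E}
    (hT : T.IsSymmetric) (x : E) :
    RCLike.re (inner 𝕜 (T x) x) ≤ sSup {μ : ℝ | HasEigenvalue T (μ : 𝕜)} * ‖x‖ ^ 2 := by
  rcases eq_or_ne x 0 with rfl | hx
  · simp
  have : Nontrivial E := ⟨⟨x, 0, hx⟩⟩
  have hbdd : BddAbove (Set.range fun y : {y : E // y ≠ 0} =>
      RCLike.re (inner 𝕜 (T y) (y : E)) / ‖(y : E)‖ ^ 2) :=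
    ⟨_, Set.forall_mem_range.2 fun y =>
      (le_abs_self _).trans (T.toContinuousLinearMap.rayleighQuotient_le_norm y)⟩
  have hfin : BddAbove {μ : ℝ | HasEigenvalue T (μ : 𝕜)} :=
    ((finite_hasEigenvalue T).preimage RCLike.ofReal_injective.injOn).bddAbove
  have hx2 : 0 < ‖x‖ ^ 2 := by positivity
  rw [← div_le_iff₀ hx2]
  exact (le_ciSup hbdd ⟨x, hx⟩).trans (le_csSup hfin hT.hasEigenvalue_iSup_of_finiteDimensional)

open Module.End in
theorem Matrix.IsHermitian.dotProduct_mulVec_le {n : Type*} [Fintype n] [DecidableEq n]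
    {M : Matrix n n ℝ} (hM : M.IsHermitian) (x : n → ℝ) :
    x ⬝ᵥ M *ᵥ x ≤ sSup {μ : ℝ | ∃ y, y ≠ 0 ∧ M *ᵥ y = μ • y} * ∑ i, x i ^ 2 := by
  have hS : {μ : ℝ | ∃ y, y ≠ 0 ∧ M *ᵥ y = μ • y} =
      {μ : ℝ | HasEigenvalue (toEuclideanLin M) (μ : ℝ)} := by
    ext μ
    constructor
    · rintro ⟨y, hy, h⟩
      exact hasEigenvalue_of_hasEigenvector (x := WithLp.toLp 2 y)
        ⟨mem_eigenspace_iff.2 (congrArg (WithLp.toLp 2) h), by simpa using hy⟩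
    · intro h
      obtain ⟨y, hy, hy0⟩ := h.exists_hasEigenvector
      exact ⟨WithLp.ofLp y, by simpa using hy0, congrArg WithLp.ofLp (mem_eigenspace_iff.1 hy)⟩
  have := (isSymmetric_toEuclideanLin_iff.2 hM).re_inner_le_sSup_mul_norm_sq (WithLp.toLp 2 x)
  rw [hS]
  simpa [EuclideanSpace.norm_sq_eq, EuclideanSpace.inner_toLp_toLp, dotProduct_comm] using this

namespace SimpleGraph

variable {V V' : Type*} {G G' H : SimpleGraph V} {H' : SimpleGraph V'} {A T : Set V} {v w a b : V}

theorem Connected.neg_dist_le_dist_sub_dist (hG : G.Connected) (u v j : V) :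
    -(G.dist u v : ℝ) ≤ G.dist u j - G.dist v j := by
  have : G.dist v j ≤ G.dist u v + G.dist u j := G.dist_comm (u := u) ▸ hG.dist_triangle
  have : (G.dist v j : ℝ) ≤ G.dist u v + G.dist u j := by exact_mod_cast this
  linarith

theorem Walk.exists_map_length_eq (f : V → V') (U : Set V)
    (hf : ∀ ⦃a b⦄, a ∈ U → b ∈ U → H.Adj a b → H'.Adj (f a) (f b))
    (p : H.Walk a b) (hp : ∀ c ∈ p.support, c ∈ U) :
    ∃ q : H'.Walk (f a) (f b), q.length = p.length := by
  induction p with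
  | nil => exact ⟨.nil, rfl⟩
  | @cons a c b hac p ih =>
    obtain ⟨q, hq⟩ := ih fun d hd => hp d (List.mem_cons_of_mem _ hd)
    refine ⟨.cons (hf (hp a (by simp)) (hp c (by simp)) hac) q, by simp [hq]⟩

def IsBranchAt (H : SimpleGraph V) (T : Set V) (w : V) : Prop :=
  ∀ ⦃a b⦄, H.Adj a b → a ∈ T → b ∉ T → b = w

namespace IsBranchAt

theorem compl (hT : H.IsBranchAt T w) : H.IsBranchAt (insert w T)ᶜ w := by
  intro a b hab ha hb
  by_contra hbw
  have hbT : b ∈ T := by simpa [hbw] using hb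
  exact ha (Or.inl (hT hab.symm hbT (fun haT => ha (Or.inr haT))))

theorem mem_support (hT : H.IsBranchAt T w) (p : H.Walk a b) (ha : a ∈ T) (hb : b ∉ T) :
    w ∈ p.support := by
  induction p with
  | nil => exact absurd ha hb
  | @cons a c b hac p ih =>
    by_cases hc : c ∈ T
    · exact List.mem_cons_of_mem _ (ih hc hb)
    · obtain rfl := hT hac ha hc
      simp

theorem dist_eq_add [DecidableEq V] (hT : H.IsBranchAt T w) (hH : H.Connected) (ha : a ∈ T)
    (hb : b ∉ T) : H.dist a b = H.dist a w + H.dist w b := by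
  obtain ⟨p, -, hp⟩ := (hH a b).exists_path_of_dist
  have hw := hT.mem_support p ha hb
  refine le_antisymm hH.dist_triangle ?_
  rw [← hp, ← p.take_spec hw, Walk.length_append]
  exact add_le_add (dist_le _) (dist_le _)

/-- A path can enter the branch only through `w`, and it cannot come back out through `w`. -/
theorem notMem_of_mem_support [DecidableEq V] (hT : H.IsBranchAt T w) (hw : w ∉ T) {p : H.Walk a b}
    (hp : p.IsPath) (ha : a ∉ T) (hb : b ∉ T) {c : V} (hc : c ∈ p.support) : c ∉ T := by
  intro hcT
  have h₁ : w ∈ (p.takeUntil c hc).support := by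
    simpa using hT.mem_support (p.takeUntil c hc).reverse hcT ha
  have h₂ : w ∈ (p.dropUntil c hc).support.tail := by
    have := hT.mem_support (p.dropUntil c hc) hcT hb
    rw [← Walk.cons_tail_support, List.mem_cons] at this
    exact this.resolve_left fun hwc => hw (hwc ▸ hcT)
  have hnd := hp.support_nodup
  rw [← p.take_spec hc, Walk.support_append] at hnd
  exact List.disjoint_of_nodup_append hnd h₁ h₂

theorem exists_walk_map [DecidableEq V] (hT : H.IsBranchAt T w) (hw : w ∉ T) (f : V → V')
    (hf : ∀ ⦃a b⦄, a ∉ T → b ∉ T → H.Adj a b → H'.Adj (f a) (f b))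
    (hab : H.Reachable a b) (ha : a ∉ T) (hb : b ∉ T) :
    ∃ q : H'.Walk (f a) (f b), q.length = H.dist a b := by
  obtain ⟨p, hp, hlen⟩ := hab.exists_path_of_dist
  rw [← hlen]
  exact p.exists_map_length_eq f Tᶜ hf fun c hc => hT.notMem_of_mem_support hw hp ha hb hc

end IsBranchAt

/-- `G'` arises from `G` by moving the branch `A` from `v` to `w` (the paper's `G̃`, with
`A = V(G₃) \ {v₀}`). -/
structure IsMove (G G' : SimpleGraph V) (A : Set V) (v w : V) : Prop where
  notMem_source : v ∉ A
  notMem_target : w ∉ A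
  isBranchAt : G.IsBranchAt A v
  adj_iff_of_mem_iff : ∀ ⦃a b⦄, (a ∈ A ↔ b ∈ A) → (G'.Adj a b ↔ G.Adj a b)
  adj_iff_of_mem_of_notMem : ∀ ⦃a b⦄, a ∈ A → b ∉ A → (G'.Adj a b ↔ b = w ∧ G.Adj a v)

namespace IsMove

theorem symm (h : G.IsMove G' A v w) : G'.IsMove G A w v where
  notMem_source := h.notMem_target
  notMem_target := h.notMem_source
  isBranchAt _ _ hab ha hb := ((h.adj_iff_of_mem_of_notMem ha hb).1 hab).1
  adj_iff_of_mem_iff _ _ hab := (h.adj_iff_of_mem_iff hab).symm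
  adj_iff_of_mem_of_notMem a b ha hb := by
    rw [h.adj_iff_of_mem_of_notMem ha h.notMem_target]
    refine ⟨fun hab => ⟨h.isBranchAt hab ha hb, ⟨rfl, h.isBranchAt hab ha hb ▸ hab⟩⟩, ?_⟩
    rintro ⟨rfl, -, hav⟩
    exact hav

theorem exists_walk_of_notMem [DecidableEq V] (h : G.IsMove G' A v w) (hab : G.Reachable a b)
    (ha : a ∉ A) (hb : b ∉ A) : ∃ q : G'.Walk a b, q.length = G.dist a b :=
  h.isBranchAt.exists_walk_map h.notMem_source id
    (fun _ _ ha hb hab => (h.adj_iff_of_mem_iff (iff_of_false ha hb)).2 hab) hab ha hb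

theorem exists_walk_of_mem [DecidableEq V] (h : G.IsMove G' A v w) (hab : G.Reachable a b)
    (ha : a ∈ A) (hb : b ∈ insert v A) :
    ∃ q : G'.Walk a (if b = v then w else b), q.length = G.dist a b := by
  have hσ : ∀ ⦃c d⦄, c ∉ (insert v A)ᶜ → d ∉ (insert v A)ᶜ → G.Adj c d →
      G'.Adj (if c = v then w else c) (if d = v then w else d) := by
    intro c d hc hd hcd
    rw [Set.notMem_compl_iff] at hc hd
    obtain rfl | hc := hc <;> obtain rfl | hd := hd
    · exact (hcd.ne rfl).elim
    · rw [if_pos rfl, if_neg hcd.ne']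
      exact ((h.adj_iff_of_mem_of_notMem hd h.notMem_target).2 ⟨rfl, hcd.symm⟩).symm
    · rw [if_neg hcd.ne, if_pos rfl]
      exact (h.adj_iff_of_mem_of_notMem hc h.notMem_target).2 ⟨rfl, hcd⟩
    · rw [if_neg (ne_of_mem_of_not_mem hc h.notMem_source),
        if_neg (ne_of_mem_of_not_mem hd h.notMem_source)]
      exact (h.adj_iff_of_mem_iff (iff_of_true hc hd)).2 hcd
  have := h.isBranchAt.compl.exists_walk_map (by simp) _ hσ hab
    (Set.notMem_compl_iff.2 (Set.mem_insert_of_mem v ha)) (Set.notMem_compl_iff.2 hb)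
  rwa [if_neg (ne_of_mem_of_not_mem ha h.notMem_source)] at this

theorem connected [DecidableEq V] (h : G.IsMove G' A v w) (hG : G.Connected) : G'.Connected := by
  refine (connected_iff_exists_forall_reachable _).2 ⟨w, fun c => Reachable.symm ?_⟩
  by_cases hc : c ∈ A
  · obtain ⟨q, -⟩ := h.exists_walk_of_mem (hG c v) hc (Set.mem_insert v A)
    simpa using q.reachable
  · obtain ⟨q, -⟩ := h.exists_walk_of_notMem (hG c w) hc h.notMem_target
    exact q.reachable

theorem dist_eq_of_notMem [DecidableEq V] (h : G.IsMove G' A v w) (hG : G.Connected) (ha : a ∉ A)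
    (hb : b ∉ A) : G'.dist a b = G.dist a b := by
  obtain ⟨q, hq⟩ := h.exists_walk_of_notMem (hG a b) ha hb
  obtain ⟨q', hq'⟩ := h.symm.exists_walk_of_notMem (h.connected hG a b) ha hb
  exact le_antisymm (hq ▸ dist_le q) (hq' ▸ dist_le q')

theorem dist_le_of_mem [DecidableEq V] (h : G.IsMove G' A v w) (hG : G.Connected) (ha : a ∈ A)
    (hb : b ∈ insert v A) : G'.dist a (if b = v then w else b) ≤ G.dist a b := by
  obtain ⟨q, hq⟩ := h.exists_walk_of_mem (hG a b) ha hb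
  exact hq ▸ dist_le q

theorem dist_target_eq_dist_source [DecidableEq V] (h : G.IsMove G' A v w) (hG : G.Connected)
    (ha : a ∈ A) : G'.dist a w = G.dist a v :=
  le_antisymm (by simpa using h.dist_le_of_mem hG ha (Set.mem_insert v A))
    (by simpa using h.symm.dist_le_of_mem (h.connected hG) ha (Set.mem_insert w A))

theorem dist_eq_of_mem [DecidableEq V] (h : G.IsMove G' A v w) (hG : G.Connected) (ha : a ∈ A)
    (hb : b ∈ A) : G'.dist a b = G.dist a b :=
  le_antisymm
    (by simpa [ne_of_mem_of_not_mem hb h.notMem_source] using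
      h.dist_le_of_mem hG ha (Set.mem_insert_of_mem v hb))
    (by simpa [ne_of_mem_of_not_mem hb h.notMem_target] using
      h.symm.dist_le_of_mem (h.connected hG) ha (Set.mem_insert_of_mem w hb))

theorem dist_add_dist_eq [DecidableEq V] (h : G.IsMove G' A v w) (hG : G.Connected) (ha : a ∈ A)
    (hb : b ∉ A) : G'.dist a b + G.dist v b = G.dist a b + G.dist w b := by
  rw [h.symm.isBranchAt.dist_eq_add (h.connected hG) ha hb, h.isBranchAt.dist_eq_add hG ha hb,
    h.dist_target_eq_dist_source hG ha, h.dist_eq_of_notMem hG h.notMem_target hb]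
  ring

end IsMove

end SimpleGraph

section DistanceLaplacian

variable {V : Type*} [Fintype V]

theorem distLaplacian_isHermitian (H : SimpleGraph V) : (distLaplacian H).IsHermitian := by
  ext a b
  by_cases h : a = b
  · subst h
    rfl
  · simp [distLaplacian, h, Ne.symm h, SimpleGraph.dist_comm]

theorem dotProduct_distLaplacian_mulVec (H : SimpleGraph V) (x : V → ℝ) :
    x ⬝ᵥ distLaplacian H *ᵥ x = ∑ a, ∑ b, (H.dist a b : ℝ) * (x a * (x a - x b)) := by
  classical
  simp only [dotProduct, mulVec, distLaplacian, transmission, sub_mul, ite_mul, zero_mul,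
    sum_sub_distrib, sum_ite_eq, mem_univ, if_true, mul_sub, mul_sum, sum_mul]
  congr 1 <;> exact sum_congr rfl fun a _ => sum_congr rfl fun b _ => by ring

theorem sum_dist_mul_sq_eq (H : SimpleGraph V) (x : V → ℝ) :
    ∑ a, ∑ b, (H.dist a b : ℝ) * (x a - x b) ^ 2 = 2 * (x ⬝ᵥ distLaplacian H *ᵥ x) := by
  rw [two_mul]
  nth_rewrite 2 [dotProduct_distLaplacian_mulVec, sum_comm]
  rw [dotProduct_distLaplacian_mulVec, ← sum_add_distrib]
  refine sum_congr rfl fun a _ => ?_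
  rw [← sum_add_distrib]
  refine sum_congr rfl fun b _ => ?_
  rw [SimpleGraph.dist_comm]
  ring

theorem sum_dist_mul_sq_le_two_mul_rhoL [DecidableEq V] (H : SimpleGraph V) {x : V → ℝ}
    (hx : ∑ a, x a ^ 2 = 1) : ∑ a, ∑ b, (H.dist a b : ℝ) * (x a - x b) ^ 2 ≤ 2 * rhoL H := by
  have := (distLaplacian_isHermitian H).dotProduct_mulVec_le x
  rw [hx, mul_one] at this
  rw [sum_dist_mul_sq_eq, rhoL]
  linarith

theorem sum_dist_mul_sq_eq_two_mul_rhoL {H : SimpleGraph V} {x : V → ℝ} (hx : ∑ a, x a ^ 2 = 1)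
    (heig : distLaplacian H *ᵥ x = rhoL H • x) :
    ∑ a, ∑ b, (H.dist a b : ℝ) * (x a - x b) ^ 2 = 2 * rhoL H := by
  rw [sum_dist_mul_sq_eq, heig, dotProduct_smul, smul_eq_mul]
  simp [dotProduct, ← sq, hx]

theorem SimpleGraph.IsMove.rhoL_add_sum_le [DecidableEq V] {G G' : SimpleGraph V} {A : Finset V}
    {v w : V} (h : G.IsMove G' A v w) (hG : G.Connected) {x : V → ℝ} (hx : ∑ a, x a ^ 2 = 1)
    (heig : distLaplacian G *ᵥ x = rhoL G • x) :
    rhoL G + ∑ i ∈ A, ∑ j ∈ Aᶜ, ((G.dist w j : ℝ) - G.dist v j) * (x i - x j) ^ 2 ≤ rhoL G' := by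
  have hsplit : ∑ a, ∑ b, ((G'.dist a b : ℝ) - G.dist a b) * (x a - x b) ^ 2 =
      2 • ∑ i ∈ A, ∑ j ∈ Aᶜ, ((G.dist w j : ℝ) - G.dist v j) * (x i - x j) ^ 2 := by
    rw [sum_sum_eq_two_nsmul_sum_sum_compl A]
    · refine congrArg _ (sum_congr rfl fun i hi => sum_congr rfl fun j hj => ?_)
      have := h.dist_add_dist_eq hG hi (mem_compl.1 hj)
      have : (G'.dist i j : ℝ) + G.dist v j = G.dist i j + G.dist w j := by exact_mod_cast this
      rw [show (G'.dist i j : ℝ) - G.dist i j = G.dist w j - G.dist v j by linarith]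
    · intro a b
      rw [G'.dist_comm, G.dist_comm]
      ring
    · intro a b hab
      by_cases ha : a ∈ A
      · rw [h.dist_eq_of_mem hG ha (hab.1 ha), sub_self, zero_mul]
      · rw [h.dist_eq_of_notMem hG ha (mt hab.2 ha), sub_self, zero_mul]
  have h₁ := sum_dist_mul_sq_le_two_mul_rhoL G' hx
  have h₂ := sum_dist_mul_sq_eq_two_mul_rhoL hx heig
  have hdiff : ∑ a, ∑ b, ((G'.dist a b : ℝ) - G.dist a b) * (x a - x b) ^ 2 =
      ∑ a, ∑ b, (G'.dist a b : ℝ) * (x a - x b) ^ 2 -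
        ∑ a, ∑ b, (G.dist a b : ℝ) * (x a - x b) ^ 2 := by
    simp only [sub_mul, sum_sub_distrib]
  rw [two_nsmul] at hsplit
  linarith

end DistanceLaplacian

section Graft

variable {V : Type*} [DecidableEq V] {G Gt : SimpleGraph V} {S S' S'' : Finset V} {v₀ u a b : V}

theorem mem_of_mem_erase_of_inter_eq_singleton
    (hab : (a ∈ S ∧ b ∈ S) ∨ (a ∈ S' ∧ b ∈ S') ∨ (a ∈ S'' ∧ b ∈ S''))
    (h' : S' ∩ S = {v₀}) (h'' : S'' ∩ S = {v₀}) (ha : a ∈ S.erase v₀) : b ∈ S := by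
  rcases hab with ⟨-, hb⟩ | ⟨ha', -⟩ | ⟨ha'', -⟩
  · exact hb
  · exact absurd ha (notMem_erase_of_inter_eq_singleton h' ha')
  · exact absurd ha (notMem_erase_of_inter_eq_singleton h'' ha'')

theorem isBranchAt_erase (hS : ∀ ⦃a b⦄, G.Adj a b → a ∈ S.erase v₀ → b ∈ S) :
    G.IsBranchAt ↑(S.erase v₀) v₀ := by
  intro a b hab ha hb
  simp only [coe_erase, Set.mem_sdiff, mem_coe, Set.mem_singleton_iff, not_and, not_not] at ha hb
  exact hb (hS hab (mem_erase.2 ⟨ha.2, ha.1⟩))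

theorem isMove_erase (hS : ∀ ⦃a b⦄, G.Adj a b → a ∈ S.erase v₀ → b ∈ S) (hu : u ∉ S)
    (hGt : ∀ a b : V, Gt.Adj a b ↔
      ((G.Adj a b ∧ ¬(a = v₀ ∧ b ∈ S ∧ G.Adj v₀ b) ∧ ¬(b = v₀ ∧ a ∈ S ∧ G.Adj v₀ a)) ∨
        (a = u ∧ b ∈ S ∧ G.Adj v₀ b) ∨ (b = u ∧ a ∈ S ∧ G.Adj v₀ a))) :
    G.IsMove Gt ↑(S.erase v₀) v₀ u where
  notMem_source := by simp
  notMem_target := by simp [hu]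
  isBranchAt := isBranchAt_erase hS
  adj_iff_of_mem_iff a b hab := by
    simp only [coe_erase, Set.mem_sdiff, mem_coe, Set.mem_singleton_iff] at hab
    have := G.loopless.irrefl v₀
    grind [SimpleGraph.Adj.ne]
  adj_iff_of_mem_of_notMem a b ha hb := by
    simp only [coe_erase, Set.mem_sdiff, mem_coe, Set.mem_singleton_iff] at ha hb
    have := G.loopless.irrefl v₀
    grind [SimpleGraph.Adj.ne, SimpleGraph.adj_comm]

theorem mul_sum_sub_sum_le_sum_dist_sub_dist [Fintype V] (hG : G.Connected) {A S₁ S₂ : Finset V}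
    (hS₁ : S₁ ⊆ Aᶜ) (hS₂ : Aᶜ \ S₁ ⊆ S₂) (x : V → ℝ)
    (hS₁dist : ∀ j ∈ S₁, G.dist u j = G.dist u v₀ + G.dist v₀ j) :
    (G.dist u v₀ : ℝ) * (∑ i ∈ A, ∑ j ∈ S₁, (x i - x j) ^ 2 - ∑ i ∈ A, ∑ j ∈ S₂, (x i - x j) ^ 2) ≤
      ∑ i ∈ A, ∑ j ∈ Aᶜ, ((G.dist u j : ℝ) - G.dist v₀ j) * (x i - x j) ^ 2 := by
  rw [← sum_sub_distrib, mul_sum]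
  refine sum_le_sum fun i _ => mul_sum_sub_sum_le_sum_mul hS₁ hS₂ (Nat.cast_nonneg _)
    (fun j => sq_nonneg _) (fun j hj => ?_) fun j _ => hG.neg_dist_le_dist_sub_dist u v₀ j
  rw [hS₁dist j hj]
  push_cast
  ring

end Graft

theorem rhoL_graft_transformation_general {V : Type} [Fintype V] [DecidableEq V]
    (G Gt : SimpleGraph V) (hG : G.Connected)
    (S₁ S₂ S₃ : Finset V) (v₀ u : V)
    (hcover : S₁ ∪ S₂ ∪ S₃ = Finset.univ)
    (h12 : S₁ ∩ S₂ = {v₀}) (h13 : S₁ ∩ S₃ = {v₀}) (h23 : S₂ ∩ S₃ = {v₀})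
    (hedges : ∀ a b : V, G.Adj a b →
      (a ∈ S₁ ∧ b ∈ S₁) ∨ (a ∈ S₂ ∧ b ∈ S₂) ∨ (a ∈ S₃ ∧ b ∈ S₃))
    (hu : u ∈ S₂) (huv₀ : u ≠ v₀)
    (hGt : ∀ a b : V, Gt.Adj a b ↔
      ((G.Adj a b ∧ ¬(a = v₀ ∧ b ∈ S₃ ∧ G.Adj v₀ b) ∧ ¬(b = v₀ ∧ a ∈ S₃ ∧ G.Adj v₀ a)) ∨
        (a = u ∧ b ∈ S₃ ∧ G.Adj v₀ b) ∨ (b = u ∧ a ∈ S₃ ∧ G.Adj v₀ a)))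
    (x : V → ℝ) (hunit : ∑ v : V, x v ^ 2 = 1)
    (heig : (distLaplacian G).mulVec x = rhoL G • x) :
    ((∑ i ∈ S₃.erase v₀, ∑ j ∈ S₁, (x i - x j) ^ 2 ≥
        ∑ i ∈ S₃.erase v₀, ∑ j ∈ S₂, (x i - x j) ^ 2 → rhoL Gt ≥ rhoL G) ∧
     (∑ i ∈ S₃.erase v₀, ∑ j ∈ S₁, (x i - x j) ^ 2 >
        ∑ i ∈ S₃.erase v₀, ∑ j ∈ S₂, (x i - x j) ^ 2 → rhoL Gt > rhoL G)) := by
  have h₂ : ∀ ⦃a b⦄, G.Adj a b → a ∈ S₂.erase v₀ → b ∈ S₂ := fun a b hab =>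
    mem_of_mem_erase_of_inter_eq_singleton (or_left_comm.1 (hedges a b hab)) h12
      (by rwa [inter_comm])
  have h₃ : ∀ ⦃a b⦄, G.Adj a b → a ∈ S₃.erase v₀ → b ∈ S₃ := fun a b hab =>
    mem_of_mem_erase_of_inter_eq_singleton (or_rotate.2 (hedges a b hab)) h13 h23
  have hu₃ : u ∉ S₃ := fun h => notMem_erase_of_inter_eq_singleton h23 hu (mem_erase.2 ⟨huv₀, h⟩)
  have hS₁ : S₁ ⊆ (S₃.erase v₀)ᶜ := fun j hj =>
    mem_compl.2 (notMem_erase_of_inter_eq_singleton h13 hj)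
  have hS₂ : (S₃.erase v₀)ᶜ \ S₁ ⊆ S₂ := fun j hj => by
    have hv₀ : v₀ ∈ S₁ := (mem_inter.1 (h12.symm ▸ mem_singleton_self v₀)).1
    have hj' := hcover ▸ mem_univ j
    simp only [mem_sdiff, mem_compl, mem_erase, mem_union] at hj hj'
    grind
  -- every path from `u` to `G₁` passes through `v₀`
  have hbound := mul_sum_sub_sum_le_sum_dist_sub_dist hG hS₁ hS₂ x fun j hj =>
    (isBranchAt_erase h₂).dist_eq_add hG (mem_erase.2 ⟨huv₀, hu⟩)
      (notMem_erase_of_inter_eq_singleton h12 hj)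
  have hkey := (isMove_erase h₃ hu₃ hGt).rhoL_add_sum_le hG hunit heig
  have hδ : (0 : ℝ) < G.dist u v₀ := by exact_mod_cast hG.pos_dist_of_ne huv₀
  constructor <;> intro h <;> nlinarith

/-- Lemma 2.1: Let `G = G₁ ∪ G₂ ∪ G₃` be connected, where the `Gᵢ` are connected induced
subgraphs on vertex sets `Sᵢ`, each with at least two vertices, pairwise intersecting exactly
in `{v₀}`, every edge of `G` lying in some `Gᵢ`.  Let `u ∈ S₂ \ {v₀}` and let `G̃` be obtained
from `G` by moving `G₃` from `v₀` to `u` (deleting all edges between `v₀` and its neighbours in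
`G₃` and joining `u` to those neighbours instead).  Let `x` be a unit eigenvector of `L_D(G)`
for `ρ_L(G)`.  Then:
(i) if `∑_{i ∈ S₃\{v₀}} ∑_{j ∈ S₁} (xᵢ - xⱼ)² ≥ ∑_{i ∈ S₃\{v₀}} ∑_{j ∈ S₂} (xᵢ - xⱼ)²`
then `ρ_L(G̃) ≥ ρ_L(G)`;
(ii) if the inequality is strict then `ρ_L(G̃) > ρ_L(G)`. -/
theorem rhoL_graft_transformation {V : Type} [Fintype V] [DecidableEq V]
    (G Gt : SimpleGraph V) (hG : G.Connected)
    (S₁ S₂ S₃ : Finset V) (v₀ u : V)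
    (hcover : S₁ ∪ S₂ ∪ S₃ = Finset.univ)
    (h12 : S₁ ∩ S₂ = {v₀}) (h13 : S₁ ∩ S₃ = {v₀}) (h23 : S₂ ∩ S₃ = {v₀})
    (hc1 : 2 ≤ S₁.card) (hc2 : 2 ≤ S₂.card) (hc3 : 2 ≤ S₃.card)
    (hconn1 : (SimpleGraph.induce (↑S₁ : Set V) G).Connected)
    (hconn2 : (SimpleGraph.induce (↑S₂ : Set V) G).Connected)
    (hconn3 : (SimpleGraph.induce (↑S₃ : Set V) G).Connected)
    (hedges : ∀ a b : V, G.Adj a b →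
      (a ∈ S₁ ∧ b ∈ S₁) ∨ (a ∈ S₂ ∧ b ∈ S₂) ∨ (a ∈ S₃ ∧ b ∈ S₃))
    (hu : u ∈ S₂) (huv₀ : u ≠ v₀)
    (hGt : ∀ a b : V, Gt.Adj a b ↔
      ((G.Adj a b ∧ ¬(a = v₀ ∧ b ∈ S₃ ∧ G.Adj v₀ b) ∧ ¬(b = v₀ ∧ a ∈ S₃ ∧ G.Adj v₀ a)) ∨
        (a = u ∧ b ∈ S₃ ∧ G.Adj v₀ b) ∨ (b = u ∧ a ∈ S₃ ∧ G.Adj v₀ a)))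
    (x : V → ℝ) (hunit : ∑ v : V, x v ^ 2 = 1)
    (heig : (distLaplacian G).mulVec x = rhoL G • x) :
    ((∑ i ∈ S₃.erase v₀, ∑ j ∈ S₁, (x i - x j) ^ 2 ≥
        ∑ i ∈ S₃.erase v₀, ∑ j ∈ S₂, (x i - x j) ^ 2 → rhoL Gt ≥ rhoL G) ∧
     (∑ i ∈ S₃.erase v₀, ∑ j ∈ S₁, (x i - x j) ^ 2 >
        ∑ i ∈ S₃.erase v₀, ∑ j ∈ S₂, (x i - x j) ^ 2 → rhoL Gt > rhoL G)) :=
  rhoL_graft_transformation_general G Gt hG S₁ S₂ S₃ v₀ u hcover h12 h13 h23 hedges hu huv₀ hGt x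
    hunit heig
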